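/- Let G be a finite simple graph with maximum degree at most k+d, let ≤ be an elimination order to degree d for G of d-height at most k with non-maximal subgraph H, and let A = V(H) ∪ {v ∈ V(G) : deg_G(v) > d}. Then the induced subgraph G[A] has an elimination order of height at most k(k+d+1) which can be extended to a tree order on V(G) in which every vertex of V(G) ∖ A is maximal and which is an elimination order to degree d for G. -/

import Mathlib

open SimpleGraph Set

variable {V : Type*}

/-- The degree of a vertex: the number of its neighbours. -/
noncomputable def gdeg (G : SimpleGraph V) (v : V) : ℕ := (G.neighborSet v).ncard

/-- The degree of `v` inside the vertex set `A`, i.e. its degree in the induced subgraph. -/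
noncomputable def degreeIn (G : SimpleGraph V) (A : Set V) (v : V) : ℕ :=
  (A ∩ G.neighborSet v).ncard

/-- A tree order: a partial order in which the set of predecessors of any
element is linearly ordered. -/
structure IsTreeOrder (le : V → V → Prop) : Prop where
  refl : ∀ a, le a a
  antisymm : ∀ a b, le a b → le b a → a = b
  trans : ∀ a b c, le a b → le b c → le a c
  downLinear : ∀ a b c, le b a → le c a → le b c ∨ le c b

/-- A chain: a set of pairwise comparable elements. -/
def IsChainOf (le : V → V → Prop) (s : Set V) : Prop :=
  ∀ a ∈ s, ∀ b ∈ s, le a b ∨ le b a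

/-- The order has height at most `k`: every chain has at most `k` elements. -/
def HeightLE (le : V → V → Prop) (k : ℕ) : Prop :=
  ∀ s : Set V, IsChainOf le s → s.ncard ≤ k

/-- `v` is a maximal element of the order `le`. -/
def IsLeMaximal (le : V → V → Prop) (v : V) : Prop := ∀ w, le v w → w = v

/-- The order has `d`-height at most `k`: every chain contains at most `k`
non-maximal elements. -/
def DHeightLE (le : V → V → Prop) (k : ℕ) : Prop :=
  ∀ s : Set V, IsChainOf le s → {v ∈ s | ¬ IsLeMaximal le v}.ncard ≤ k

/-- An elimination order for `G`: a tree order in which the endpoints of each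
edge are comparable. -/
def IsElimOrder (G : SimpleGraph V) (le : V → V → Prop) : Prop :=
  IsTreeOrder le ∧ ∀ u v, G.Adj u v → le u v ∨ le v u

/-- The set `S_v` of neighbours of `v` that are incomparable to `v`. -/
def Sset (G : SimpleGraph V) (le : V → V → Prop) (v : V) : Set V :=
  {u | G.Adj u v ∧ ¬ le u v ∧ ¬ le v u}

/-- An elimination order to degree `d` for `G`. -/
def IsElimOrderToDeg (G : SimpleGraph V) (d : ℕ) (le : V → V → Prop) : Prop :=
  IsTreeOrder le ∧ ∀ v : V, Sset G le v = ∅ ∨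
    (IsLeMaximal le v ∧ (Sset G le v).ncard ≤ d ∧
      ∀ u ∈ Sset G le v, {w | le w u ∧ w ≠ u} = {w | le w v ∧ w ≠ v})

/-- `C` is the vertex set of a connected component of the induced subgraph `G[B]`:
a maximal connected subset of `B`. -/
def IsCompOf (G : SimpleGraph V) (B C : Set V) : Prop :=
  C.Nonempty ∧ C ⊆ B ∧ (G.induce C).Connected ∧
    ∀ C', C ⊆ C' → C' ⊆ B → (G.induce C').Connected → C' = C

/-- `TdLE G A k` says that the tree-depth of the induced subgraph `G[A]` is at
most `k`, following the recursive definition of tree-depth. -/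
inductive TdLE (G : SimpleGraph V) : Set V → ℕ → Prop
  | empty (k : ℕ) : TdLE G ∅ k
  | conn (A : Set V) (k : ℕ) (hc : (G.induce A).Connected) (v : V) (hv : v ∈ A)
      (h : TdLE G (A \ {v}) k) : TdLE G A (k + 1)
  | disconn (A : Set V) (k : ℕ) (hne : A.Nonempty) (hc : ¬ (G.induce A).Connected)
      (h : ∀ C, IsCompOf G A C → TdLE G C k) : TdLE G A k

/-- `EdLE G d A k` says that the elimination distance to degree `d` of the
induced subgraph `G[A]` is at most `k`, following the recursive definition. -/
inductive EdLE (G : SimpleGraph V) (d : ℕ) : Set V → ℕ → Prop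
  | base (A : Set V) (k : ℕ) (h : ∀ v ∈ A, degreeIn G A v ≤ d) : EdLE G d A k
  | conn (A : Set V) (k : ℕ) (hd : ¬ ∀ v ∈ A, degreeIn G A v ≤ d)
      (hc : (G.induce A).Connected) (v : V) (hv : v ∈ A)
      (h : EdLE G d (A \ {v}) k) : EdLE G d A (k + 1)
  | disconn (A : Set V) (k : ℕ) (hd : ¬ ∀ v ∈ A, degreeIn G A v ≤ d)
      (hc : ¬ (G.induce A).Connected)
      (h : ∀ C, IsCompOf G A C → EdLE G d C k) : EdLE G d A k

/-- The `m`-degree torso of `G`: the graph on the vertices of degree greater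
than `m`, where two such vertices are adjacent if some path of `G` between them
has all its internal vertices of degree at most `m`. -/
def ATorso (G : SimpleGraph V) (m : ℕ) : SimpleGraph {v : V // m < gdeg G v} where
  Adj u v := u ≠ v ∧ ∃ p : G.Walk u.1 v.1, p.IsPath ∧
      ∀ w ∈ p.support, w ≠ u.1 → w ≠ v.1 → gdeg G w ≤ m
  symm := by
    constructor
    rintro u v ⟨hne, p, hp, hsup⟩
    refine ⟨hne.symm, p.reverse, hp.reverse, fun w hw h1 h2 => ?_⟩
    rw [SimpleGraph.Walk.support_reverse, List.mem_reverse] at hw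
    exact hsup w hw h2 h1
  loopless := by constructor; rintro u ⟨hne, -⟩; exact hne rfl

/-! Within every cluster of `le`-maximal vertices that see each other through incomparable
edges (all of them have the same strict down-set), stack the vertices of degree `> d` into a
chain, below the vertices of degree `≤ d`, which stay maximal. An edge of `G[A]` whose ends
are `le`-incomparable joins two high-degree vertices of one cluster, so it becomes
comparable. A chain of the new order consists of at most `k` non-maximal vertices followed by
maximal vertices sharing one down-set `D` with `|D| ≤ k`; every maximal vertex of degree
`> d` has a neighbour in `D` (it has at most `d` incomparable neighbours), so these vertices
lie in the neighbourhood of `D`, which has at most `k (k + d)` vertices. -/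

theorem Set.ncard_biUnion_le_mul {ι α : Type*} {t : Set ι} (ht : t.Finite) {s : ι → Set α}
    {m : ℕ} (hs : ∀ i ∈ t, (s i).ncard ≤ m) : (⋃ i ∈ t, s i).ncard ≤ t.ncard * m := by
  have hle := ht.toFinset.set_ncard_biUnion_le s
  simp only [Set.Finite.mem_toFinset] at hle
  calc (⋃ i ∈ t, s i).ncard ≤ ∑ i ∈ ht.toFinset, (s i).ncard := hle
    _ ≤ ht.toFinset.card • m :=
        Finset.sum_le_card_nsmul _ _ _ fun i hi => hs i (ht.mem_toFinset.mp hi)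
    _ = t.ncard * m := by rw [smul_eq_mul, Set.ncard_eq_toFinset_card t ht]

section TreeOrder

variable {α : Type*} {le : V → V → Prop}

theorem IsTreeOrder.comap (h : IsTreeOrder le) {f : α → V} (hf : Function.Injective f) :
    IsTreeOrder fun a b => le (f a) (f b) where
  refl a := h.refl (f a)
  antisymm _ _ hab hba := hf (h.antisymm _ _ hab hba)
  trans a b c := h.trans (f a) (f b) (f c)
  downLinear a b c := h.downLinear (f a) (f b) (f c)

theorem heightLE_restrict {A : Set V} {n : ℕ}
    (h : ∀ s ⊆ A, IsChainOf le s → s.ncard ≤ n) : HeightLE (fun a b : A => le a b) n := by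
  intro s hs
  rw [← Set.ncard_image_of_injective s Subtype.val_injective]
  refine h _ (Set.image_subset_range _ _ |>.trans Subtype.range_coe.subset) ?_
  rintro _ ⟨a, ha, rfl⟩ _ ⟨b, hb, rfl⟩
  exact hs a ha b hb

def strictLowerSet (le : V → V → Prop) (v : V) : Set V := {w | le w v ∧ w ≠ v}

theorem le_of_le_of_strictLowerSet_eq {a b c : V} (hab : le a b) (hne : a ≠ b)
    (hbc : strictLowerSet le b = strictLowerSet le c) : le a c :=
  (show a ∈ strictLowerSet le c from hbc ▸ ⟨hab, hne⟩).1

theorem IsTreeOrder.isChainOf_strictLowerSet (h : IsTreeOrder le) (v : V) :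
    IsChainOf le (strictLowerSet le v) :=
  fun a ha b hb => h.downLinear v a b ha.1 hb.1

theorem DHeightLE.ncard_le {k : ℕ} (hk : DHeightLE le k) {s : Set V} (hs : IsChainOf le s)
    (hmax : ∀ v ∈ s, ¬ IsLeMaximal le v) : s.ncard ≤ k := by
  simpa [Set.sep_eq_self_iff_mem_true.mpr hmax] using hk s hs

theorem ncard_strictLowerSet_le (h : IsTreeOrder le) {k : ℕ} (hk : DHeightLE le k) (v : V) :
    (strictLowerSet le v).ncard ≤ k :=
  hk.ncard_le (h.isChainOf_strictLowerSet v) fun _ hw hmax => hw.2 (hmax v hw.1).symm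

end TreeOrder

section StackedOrder

variable {β : Type*} [LinearOrder β] {le : V → V → Prop} {P : V → Prop} {r : V → β}

def stackedOrder (le : V → V → Prop) (P : V → Prop) (r : V → β) (a b : V) : Prop :=
  le a b ∨ (P a ∧ P b ∧ strictLowerSet le a = strictLowerSet le b ∧ r a < r b)

theorem IsTreeOrder.stackedOrder [OrderTop β] (h : IsTreeOrder le)
    (hP : ∀ v, P v → IsLeMaximal le v)
    (hr : Set.InjOn r {v | r v ≠ ⊤}) : IsTreeOrder (stackedOrder le P r) where
  refl a := Or.inl (h.refl a)
  antisymm := by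
    rintro a b (hab | ⟨-, hb, -, hab⟩) (hba | ⟨-, ha, -, hba⟩)
    · exact h.antisymm a b hab hba
    · exact (hP a ha b hab).symm
    · exact hP b hb a hba
    · exact absurd (hab.trans hba) (lt_irrefl _)
  trans := by
    rintro a b c (hab | ⟨ha, hb, hDab, hab⟩) (hbc | ⟨hb', hc, hDbc, hbc⟩)
    · exact Or.inl (h.trans a b c hab hbc)
    · obtain rfl | hne := eq_or_ne a b
      · exact Or.inr ⟨hb', hc, hDbc, hbc⟩
      · exact Or.inl (le_of_le_of_strictLowerSet_eq hab hne hDbc)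
    · obtain rfl := hP b hb c hbc
      exact Or.inr ⟨ha, hb, hDab, hab⟩
    · exact Or.inr ⟨ha, hc, hDab.trans hDbc, hab.trans hbc⟩
  downLinear := by
    rintro a b c (hba | ⟨hb, ha, hDba, hba⟩) (hca | ⟨hc, ha', hDca, hca⟩)
    · exact (h.downLinear a b c hba hca).imp Or.inl Or.inl
    · obtain rfl | hne := eq_or_ne b a
      · exact Or.inr (Or.inr ⟨hc, ha', hDca, hca⟩)
      · exact Or.inl (Or.inl (le_of_le_of_strictLowerSet_eq hba hne hDca.symm))
    · obtain rfl | hne := eq_or_ne c a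
      · exact Or.inl (Or.inr ⟨hb, ha, hDba, hba⟩)
      · exact Or.inr (Or.inl (le_of_le_of_strictLowerSet_eq hca hne hDba.symm))
    · rcases lt_trichotomy (r b) (r c) with hbc | hbc | hbc
      · exact Or.inl (Or.inr ⟨hb, hc, hDba.trans hDca.symm, hbc⟩)
      · exact Or.inl (Or.inl (hr (ne_top_of_lt hba) (ne_top_of_lt hca) hbc ▸ h.refl b))
      · exact Or.inr (Or.inr ⟨hc, hb, hDca.trans hDba.symm, hbc⟩)

theorem isLeMaximal_stackedOrder [OrderTop β] {v : V} (hmax : IsLeMaximal le v)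
    (hv : r v = ⊤) :
    IsLeMaximal (stackedOrder le P r) v := by
  rintro w (hvw | ⟨-, -, -, hvw⟩)
  · exact hmax w hvw
  · exact absurd hvw (hv ▸ not_top_lt)

theorem le_of_stackedOrder_of_not_isLeMaximal (hP : ∀ v, P v → IsLeMaximal le v) {a b : V}
    (hab : stackedOrder le P r a b) (ha : ¬ IsLeMaximal le a) : le a b :=
  hab.resolve_right fun h => ha (hP a h.1)

theorem strictLowerSet_eq_of_stackedOrder {a b : V} (ha : IsLeMaximal le a)
    (hab : stackedOrder le P r a b) (hne : a ≠ b) : strictLowerSet le a = strictLowerSet le b :=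
  (hab.resolve_left fun h => hne (ha b h).symm).2.2.1

theorem strictLowerSet_stackedOrder_eq {u v : V} (hu : P u) (hv : P v)
    (hD : strictLowerSet le u = strictLowerSet le v) (hr : r u = r v) :
    strictLowerSet (stackedOrder le P r) u = strictLowerSet (stackedOrder le P r) v := by
  suffices key : ∀ u v, P v → strictLowerSet le u = strictLowerSet le v → r u = r v →
      strictLowerSet (stackedOrder le P r) u ⊆ strictLowerSet (stackedOrder le P r) v from
    (key u v hv hD hr).antisymm (key v u hu hD.symm hr.symm)
  rintro u v hv hD hr w ⟨hwu | ⟨hw, -, hDw, hwu⟩, hne⟩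
  · have hw : w ∈ strictLowerSet le v := hD ▸ ⟨hwu, hne⟩
    exact ⟨Or.inl hw.1, hw.2⟩
  · exact ⟨Or.inr ⟨hw, hv, hDw.trans hD, hr ▸ hwu⟩, fun h => (h ▸ hr ▸ hwu).false⟩

end StackedOrder

section ElimOrderToDeg

variable {G : SimpleGraph V} {d : ℕ} {le : V → V → Prop}

theorem mem_Sset_comm {u v : V} : u ∈ Sset G le v ↔ v ∈ Sset G le u :=
  ⟨fun ⟨hadj, huv, hvu⟩ => ⟨hadj.symm, hvu, huv⟩, fun ⟨hadj, hvu, huv⟩ => ⟨hadj.symm, huv, hvu⟩⟩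

theorem Sset_subset_of_le {le' : V → V → Prop} (h : ∀ a b, le a b → le' a b) (v : V) :
    Sset G le' v ⊆ Sset G le v :=
  fun _ ⟨hadj, huv, hvu⟩ => ⟨hadj, mt (h _ _) huv, mt (h _ _) hvu⟩

namespace IsElimOrderToDeg

theorem isLeMaximal (hle : IsElimOrderToDeg G d le) {v : V} (hv : (Sset G le v).Nonempty) :
    IsLeMaximal le v :=
  ((hle.2 v).resolve_left hv.ne_empty).1

theorem ncard_Sset_le (hle : IsElimOrderToDeg G d le) (v : V) : (Sset G le v).ncard ≤ d := by
  rcases hle.2 v with hv | hv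
  · simp [hv]
  · exact hv.2.1

theorem strictLowerSet_eq (hle : IsElimOrderToDeg G d le) {u v : V} (hu : u ∈ Sset G le v) :
    strictLowerSet le u = strictLowerSet le v :=
  ((hle.2 v).resolve_left (Set.nonempty_of_mem hu).ne_empty).2.2 u hu

-- A maximal vertex has at most `d` neighbours outside its down-set.
theorem exists_adj_of_lt_gdeg [Finite V] (hle : IsElimOrderToDeg G d le) {v : V}
    (hmax : IsLeMaximal le v) (hdeg : d < gdeg G v) :
    ∃ w ∈ strictLowerSet le v, G.Adj w v := by
  by_contra! hnone
  have hsub : G.neighborSet v ⊆ Sset G le v := by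
    intro w (hvw : G.Adj v w)
    refine ⟨hvw.symm, fun hwv => hnone w ⟨hwv, hvw.ne'⟩ hvw.symm, fun hvw' => ?_⟩
    exact hvw.ne' (hmax w hvw')
  exact hdeg.not_ge ((Set.ncard_le_ncard hsub).trans (hle.ncard_Sset_le v))

variable {β : Type*} [LinearOrder β] [OrderTop β] {r : V → β}

theorem stackedOrder_total_of_adj (hle : IsElimOrderToDeg G d le)
    (hr : Set.InjOn r {v | r v ≠ ⊤}) {u v : V} (huv : G.Adj u v)
    (hu : IsLeMaximal le u → r u ≠ ⊤) (hv : IsLeMaximal le v → r v ≠ ⊤) :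
    stackedOrder le (fun v => (Sset G le v).Nonempty) r u v ∨
      stackedOrder le (fun v => (Sset G le v).Nonempty) r v u := by
  by_cases hle_uv : le u v
  · exact Or.inl (Or.inl hle_uv)
  by_cases hle_vu : le v u
  · exact Or.inr (Or.inl hle_vu)
  have huS : u ∈ Sset G le v := ⟨huv, hle_uv, hle_vu⟩
  have hP : (Sset G le u).Nonempty ∧ (Sset G le v).Nonempty :=
    ⟨⟨v, mem_Sset_comm.mp huS⟩, ⟨u, huS⟩⟩
  have hD := hle.strictLowerSet_eq huS
  have hne : r u ≠ r v := fun h =>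
    huv.ne (hr (hu (hle.isLeMaximal hP.1)) (hv (hle.isLeMaximal hP.2)) h)
  rcases hne.lt_or_gt with h | h
  · exact Or.inl (Or.inr ⟨hP.1, hP.2, hD, h⟩)
  · exact Or.inr (Or.inr ⟨hP.2, hP.1, hD.symm, h⟩)

theorem stackedOrder [Finite V] (hle : IsElimOrderToDeg G d le)
    (hr : Set.InjOn r {v | r v ≠ ⊤}) :
    IsElimOrderToDeg G d (stackedOrder le (fun v => (Sset G le v).Nonempty) r) := by
  set P : V → Prop := fun v => (Sset G le v).Nonempty
  have hsub := Sset_subset_of_le (G := G) fun a b (h : le a b) =>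
    (Or.inl h : _root_.stackedOrder le P r a b)
  refine ⟨hle.1.stackedOrder (fun _ => hle.isLeMaximal) hr, fun v => ?_⟩
  by_cases hv : P v
  swap
  · exact Or.inl (Set.subset_empty_iff.mp (Set.not_nonempty_iff_eq_empty.mp hv ▸ hsub v))
  by_cases hrv : r v = ⊤
  swap
  · refine Or.inl (Set.eq_empty_of_forall_notMem fun u hu => ?_)
    have huS := hsub v hu
    have hD := hle.strictLowerSet_eq huS
    rcases lt_trichotomy (r u) (r v) with h | h | h
    · exact hu.2.1 (Or.inr ⟨⟨v, mem_Sset_comm.mp huS⟩, hv, hD, h⟩)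
    · exact hu.1.ne (hr (show r u ≠ ⊤ from h ▸ hrv) hrv h)
    · exact hu.2.2 (Or.inr ⟨hv, ⟨v, mem_Sset_comm.mp huS⟩, hD.symm, h⟩)
  refine Or.inr ⟨isLeMaximal_stackedOrder (hle.isLeMaximal hv) hrv,
    (Set.ncard_le_ncard (hsub v)).trans (hle.ncard_Sset_le v), fun u hu => ?_⟩
  have huS := hsub v hu
  have hD := hle.strictLowerSet_eq huS
  have hP : P u := ⟨v, mem_Sset_comm.mp huS⟩
  have hru : r u = ⊤ := by
    by_contra hru
    exact hu.2.1 (Or.inr ⟨hP, hv, hD, hrv ▸ lt_top_iff_ne_top.mpr hru⟩)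
  exact strictLowerSet_stackedOrder_eq hP hv hD (hru.trans hrv.symm)

end IsElimOrderToDeg
end ElimOrderToDeg

section Height

variable {G : SimpleGraph V} {d k : ℕ} {le : V → V → Prop} {P : V → Prop} {β : Type*}
  [LinearOrder β] {r : V → β} {s : Set V}

theorem ncard_not_isLeMaximal_le_of_isChainOf_stackedOrder (hP : ∀ v, P v → IsLeMaximal le v)
    (hht : DHeightLE le k) (hs : IsChainOf (stackedOrder le P r) s) :
    {v ∈ s | ¬ IsLeMaximal le v}.ncard ≤ k :=
  hht.ncard_le
    (fun a ha b hb => (hs a ha.1 b hb.1).imp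
      (le_of_stackedOrder_of_not_isLeMaximal hP · ha.2)
      (le_of_stackedOrder_of_not_isLeMaximal hP · hb.2))
    fun _ hv => hv.2

theorem ncard_isLeMaximal_le_of_isChainOf_stackedOrder [Finite V]
    (hle : IsElimOrderToDeg G d le) (hht : DHeightLE le k) (hΔ : ∀ v, gdeg G v ≤ k + d)
    (hs : IsChainOf (stackedOrder le P r) s)
    (hhigh : ∀ v ∈ s, IsLeMaximal le v → d < gdeg G v) :
    {v ∈ s | IsLeMaximal le v}.ncard ≤ k * (k + d) := by
  rcases Set.eq_empty_or_nonempty {v ∈ s | IsLeMaximal le v} with hempty | ⟨v₀, hv₀s, hv₀⟩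
  · simp [hempty]
  have hsub : {v ∈ s | IsLeMaximal le v} ⊆ ⋃ w ∈ strictLowerSet le v₀, G.neighborSet w := by
    rintro u ⟨hus, hu⟩
    have hD : strictLowerSet le u = strictLowerSet le v₀ := by
      obtain rfl | hne := eq_or_ne u v₀
      · rfl
      rcases hs u hus v₀ hv₀s with h | h
      · exact strictLowerSet_eq_of_stackedOrder hu h hne
      · exact (strictLowerSet_eq_of_stackedOrder hv₀ h hne.symm).symm
    obtain ⟨w, hw, hwu⟩ := hle.exists_adj_of_lt_gdeg hu (hhigh u hus hu)
    exact Set.mem_biUnion (hD ▸ hw) hwu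
  calc {v ∈ s | IsLeMaximal le v}.ncard
      ≤ (⋃ w ∈ strictLowerSet le v₀, G.neighborSet w).ncard := Set.ncard_le_ncard hsub
    _ ≤ (strictLowerSet le v₀).ncard * (k + d) :=
        Set.ncard_biUnion_le_mul (Set.toFinite _) fun w _ => hΔ w
    _ ≤ k * (k + d) := Nat.mul_le_mul_right _ (ncard_strictLowerSet_le hle.1 hht v₀)

theorem ncard_le_of_isChainOf_stackedOrder [Finite V] (hle : IsElimOrderToDeg G d le)
    (hht : DHeightLE le k) (hΔ : ∀ v, gdeg G v ≤ k + d) (hP : ∀ v, P v → IsLeMaximal le v)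
    (hs : IsChainOf (stackedOrder le P r) s)
    (hhigh : ∀ v ∈ s, IsLeMaximal le v → d < gdeg G v) :
    s.ncard ≤ k * (k + d + 1) := by
  have hsplit : s ⊆ {v ∈ s | ¬ IsLeMaximal le v} ∪ {v ∈ s | IsLeMaximal le v} := fun v hv =>
    (em (IsLeMaximal le v)).elim (fun h => Or.inr ⟨hv, h⟩) (fun h => Or.inl ⟨hv, h⟩)
  calc s.ncard
      ≤ {v ∈ s | ¬ IsLeMaximal le v}.ncard + {v ∈ s | IsLeMaximal le v}.ncard :=
        (Set.ncard_le_ncard hsplit).trans (Set.ncard_union_le _ _)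
    _ ≤ k + k * (k + d) :=
        add_le_add (ncard_not_isLeMaximal_le_of_isChainOf_stackedOrder hP hht hs)
          (ncard_isLeMaximal_le_of_isChainOf_stackedOrder hle hht hΔ hs hhigh)
    _ = k * (k + d + 1) := by ring

end Height

/-- If `G` has maximum degree at most `k + d` and `le` is an elimination order to
degree `d` of `d`-height at most `k` with non-maximal subgraph `H`, and
`A = V(H) ∪ {v | deg v > d}`, then `G[A]` has an elimination order of height at most
`k(k+d+1)` extending to a tree order on `V(G)` in which every vertex outside `A`
is maximal and which is an elimination order to degree `d` for `G`. -/
theorem adding_high_degree_vertices {V : Type*} [Fintype V] (G : SimpleGraph V)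
    (k d : ℕ) (hΔ : ∀ v, gdeg G v ≤ k + d)
    (le : V → V → Prop) (hle : IsElimOrderToDeg G d le) (hht : DHeightLE le k)
    (A : Set V) (hA : A = {v | ¬ IsLeMaximal le v} ∪ {v | d < gdeg G v}) :
    ∃ leA : A → A → Prop,
      IsElimOrder (G.induce A) leA ∧ HeightLE leA (k * (k + d + 1)) ∧
      ∃ le' : V → V → Prop, (∀ a b : A, le' a.1 b.1 ↔ leA a b) ∧
        (∀ v ∉ A, IsLeMaximal le' v) ∧ IsElimOrderToDeg G d le' := by
  classical
  let r : V → WithTop ℕ := fun v => if d < gdeg G v then (Fintype.equivFin V v : ℕ) else ⊤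
  have hr_ne_top : ∀ v, r v ≠ ⊤ ↔ d < gdeg G v := fun v => by
    by_cases h : d < gdeg G v <;> simp [r, h]
  have hr : Set.InjOn r {v | r v ≠ ⊤} := fun u hu v hv huv => by
    simp only [r, if_pos ((hr_ne_top u).mp hu), if_pos ((hr_ne_top v).mp hv), Nat.cast_inj,
      Fin.val_inj] at huv
    exact (Fintype.equivFin V).injective huv
  have hhigh : ∀ v ∈ A, IsLeMaximal le v → d < gdeg G v := by
    subst hA
    rintro v (hv | hv) hmax
    exacts [absurd hmax hv, hv]
  have hmaxA : ∀ v ∉ A, IsLeMaximal le v ∧ r v = ⊤ := by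
    subst hA
    intro v hv
    simp only [Set.mem_union, Set.mem_ofPred_eq, not_or, not_not] at hv
    exact ⟨hv.1, not_not.mp (mt (hr_ne_top v).mp hv.2)⟩
  let le' := stackedOrder le (fun v => (Sset G le v).Nonempty) r
  have htree : IsTreeOrder le' := hle.1.stackedOrder (fun _ => hle.isLeMaximal) hr
  refine ⟨fun a b => le' a b, ⟨htree.comap Subtype.val_injective, fun a b hab => ?_⟩,
    heightLE_restrict fun s hsA hs => ?_, le', fun _ _ => Iff.rfl, fun v hv => ?_,
    hle.stackedOrder hr⟩
  · exact hle.stackedOrder_total_of_adj hr hab (fun h => (hr_ne_top a).mpr (hhigh a a.2 h))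
      (fun h => (hr_ne_top b).mpr (hhigh b b.2 h))
  · exact ncard_le_of_isChainOf_stackedOrder hle hht hΔ (fun _ => hle.isLeMaximal) hs
      fun v hv => hhigh v (hsA hv)
  · exact isLeMaximal_stackedOrder (hmaxA v hv).1 (hmaxA v hv).2
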